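/- Let s : Fin p → Fin p → ℝ be a similarity matrix, λ ∈ ℝ, and let s_λ be the shifted similarity with s_λ(i,i) = s(i,i) + λ and s_λ(i,j) = s(i,j) for i ≠ j. For any two pairs of disjoint nonempty finite subsets (C₁, C₁') and (C₂, C₂') of Fin p, one has δ_{s_λ}(C₁,C₁') ≤ δ_{s_λ}(C₂,C₂') if and only if δ_s(C₁,C₁') ≤ δ_s(C₂,C₂'); in particular the minimizing candidate fusion at every step of adjacency-constrained Ward HAC is the same for s and s_λ. -/

import Mathlib

open Finset

/-- The similarity sum `S_s(C) = ∑_{(i,j)∈C×C} s(i,j)`. -/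
def simSum {p : ℕ} (s : Fin p → Fin p → ℝ) (C : Finset (Fin p)) : ℝ :=
  ∑ i ∈ C, ∑ j ∈ C, s i j

/-- The Ward linkage associated with the similarity `s`:
`δ_s(C,C') = S_s(C)/|C| + S_s(C')/|C'| − S_s(C ∪ C')/(|C|+|C'|)`. -/
noncomputable def wardS {p : ℕ} (s : Fin p → Fin p → ℝ) (C C' : Finset (Fin p)) : ℝ :=
  simSum s C / C.card + simSum s C' / C'.card
    - simSum s (C ∪ C') / (C.card + C'.card)

/-- The shifted similarity `s_λ`, with `s_λ(i,i) = s(i,i) + λ` and `s_λ(i,j) = s(i,j)` for `i ≠ j`. -/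
def shiftSim {p : ℕ} (s : Fin p → Fin p → ℝ) (lam : ℝ) : Fin p → Fin p → ℝ :=
  fun i j => if i = j then s i j + lam else s i j

/-! Shifting the diagonal by `λ` adds `λ * |C|` to `S(C)`, so each of the three normalized terms of
the Ward linkage gains `λ` and `δ_{s_λ} = δ_s + λ` on disjoint nonempty clusters. -/

section

variable {p : ℕ} (s : Fin p → Fin p → ℝ) (lam : ℝ)

lemma shiftSim_apply (i j : Fin p) : shiftSim s lam i j = s i j + if i = j then lam else 0 := by
  unfold shiftSim
  split_ifs <;> simp

lemma simSum_shiftSim (C : Finset (Fin p)) : simSum (shiftSim s lam) C = simSum s C + lam * #C := by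
  simp only [simSum, shiftSim_apply, sum_add_distrib, sum_ite_eq, sum_ite_mem, inter_self,
    sum_const, nsmul_eq_mul, mul_comm]

lemma wardS_shiftSim {C C' : Finset (Fin p)} (hC : C.Nonempty) (hC' : C'.Nonempty)
    (hdisj : Disjoint C C') : wardS (shiftSim s lam) C C' = wardS s C C' + lam := by
  have hC0 : (#C : ℝ) ≠ 0 := by exact_mod_cast hC.card_ne_zero
  have hC'0 : (#C' : ℝ) ≠ 0 := by exact_mod_cast hC'.card_ne_zero
  have hsum0 : (#C : ℝ) + #C' ≠ 0 := by positivity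
  simp only [wardS, simSum_shiftSim, card_union_of_disjoint hdisj, Nat.cast_add]
  field_simp
  ring

end

/-- Order of Ward linkages is preserved by the diagonal shift: for any two pairs of disjoint
nonempty clusters, `δ_{s_λ}(C₁,C₁') ≤ δ_{s_λ}(C₂,C₂') ↔ δ_s(C₁,C₁') ≤ δ_s(C₂,C₂')`; hence the
minimizing candidate fusion at each step of adjacency-constrained Ward HAC is the same for
`s` and `s_λ`. -/
theorem wardS_shiftSim_le_iff {p : ℕ} (s : Fin p → Fin p → ℝ) (lam : ℝ)
    (C₁ C₁' C₂ C₂' : Finset (Fin p))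
    (hC₁ : C₁.Nonempty) (hC₁' : C₁'.Nonempty) (hdisj₁ : Disjoint C₁ C₁')
    (hC₂ : C₂.Nonempty) (hC₂' : C₂'.Nonempty) (hdisj₂ : Disjoint C₂ C₂') :
    wardS (shiftSim s lam) C₁ C₁' ≤ wardS (shiftSim s lam) C₂ C₂' ↔
      wardS s C₁ C₁' ≤ wardS s C₂ C₂' := by
  rw [wardS_shiftSim s lam hC₁ hC₁' hdisj₁, wardS_shiftSim s lam hC₂ hC₂' hdisj₂,
    add_le_add_iff_right]
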